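/- arXiv:2008.06704 — 7 statements merged into one kernel-verified Lean document; each statement's English description precedes it below -/
import Mathlib

section
/- For γ > 1 there exist constants c₁, c₂ > 0 such that for all ρ, ρ̄ with 0 ≤ ρ, ρ̄ ≤ C: c₁(ρ^{γ−1} + ρ̄^{γ−1})(ρ − ρ̄)² ≤ (ρ^γ − ρ̄^γ)(ρ − ρ̄) ≤ c₂(ρ^{γ−1} + ρ̄^{γ−1})(ρ − ρ̄)². -/
private lemma rpow_sub_one_mul {γ : ℝ} (hγ : 1 < γ) {a : ℝ} (ha : 0 ≤ a) :
    a ^ (γ - 1) * a = a ^ γ := by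
  rcases eq_or_lt_of_le ha with rfl | ha'
  · rw [Real.zero_rpow (by linarith), Real.zero_rpow (by linarith), mul_zero]
  · rw [← Real.rpow_add_one (ne_of_gt ha'), sub_add_cancel]

private lemma key_lemma {γ : ℝ} (hγ : 1 < γ) {b a : ℝ} (hb : 0 ≤ b) (hba : b ≤ a) :
    (1/2 : ℝ) * (a ^ (γ - 1) + b ^ (γ - 1)) * (a - b) ^ 2 ≤ (a ^ γ - b ^ γ) * (a - b) ∧
      (a ^ γ - b ^ γ) * (a - b) ≤ γ * (a ^ (γ - 1) + b ^ (γ - 1)) * (a - b) ^ 2 := by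
  have ha : 0 ≤ a := hb.trans hba
  have h1 : a ^ (γ - 1) * a = a ^ γ := rpow_sub_one_mul hγ ha
  have h2 : b ^ (γ - 1) * b = b ^ γ := rpow_sub_one_mul hγ hb
  have h3 : b ^ (γ - 1) ≤ a ^ (γ - 1) := Real.rpow_le_rpow hb hba (by linarith)
  have hB : 0 ≤ b ^ (γ - 1) := Real.rpow_nonneg hb _
  have hab : 0 ≤ a - b := sub_nonneg.mpr hba
  -- linear lower bound
  have hlow : (a ^ (γ - 1) + b ^ (γ - 1)) * (a - b) ≤ 2 * (a ^ γ - b ^ γ) := by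
    nlinarith [mul_nonneg (sub_nonneg.mpr h3) ha, mul_nonneg (sub_nonneg.mpr h3) hb]
  -- linear upper bound
  have hup : a ^ γ - b ^ γ ≤ γ * (a ^ (γ - 1) * (a - b)) := by
    rcases eq_or_lt_of_le ha with rfl | ha'
    · have hb0 : b = 0 := le_antisymm hba hb
      subst hb0
      simp
    · have ht : b / a ≤ 1 := (div_le_one ha').mpr hba
      have ht0 : 0 ≤ b / a := div_nonneg hb (le_of_lt ha')
      have e2 : a ^ (γ - 1) * (a - b) = a ^ γ * (1 - b / a) := by
        rw [← h1]; field_simp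
      have e3 : b ^ γ = a ^ γ * (b / a) ^ γ := by
        rw [← Real.mul_rpow ha ht0, mul_div_cancel₀ _ (ne_of_gt ha')]
      have bern : 1 + γ * (b / a - 1) ≤ (b / a) ^ γ := by
        have := one_add_mul_self_le_rpow_one_add (s := b / a - 1) (by linarith) hγ.le
        simpa using this
      rw [e2, e3]
      nlinarith [mul_le_mul_of_nonneg_left bern (Real.rpow_nonneg ha γ)]
  constructor
  · nlinarith [mul_le_mul_of_nonneg_right hlow hab]
  · nlinarith [mul_le_mul_of_nonneg_right hup hab, mul_nonneg (mul_nonneg hB hab) hab, (by linarith : (0:ℝ) < γ)]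

theorem pressure_two_sided_bound (γ C : ℝ) (hγ : 1 < γ) (hC : 0 < C) :
    ∃ c₁ c₂ : ℝ, 0 < c₁ ∧ 0 < c₂ ∧
      ∀ ρ ρbar : ℝ, 0 ≤ ρ → ρ ≤ C → 0 ≤ ρbar → ρbar ≤ C →
        c₁ * (ρ ^ (γ - 1) + ρbar ^ (γ - 1)) * (ρ - ρbar) ^ 2 ≤
          (ρ ^ γ - ρbar ^ γ) * (ρ - ρbar) ∧
        (ρ ^ γ - ρbar ^ γ) * (ρ - ρbar) ≤
          c₂ * (ρ ^ (γ - 1) + ρbar ^ (γ - 1)) * (ρ - ρbar) ^ 2 := by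
  refine ⟨1/2, γ, by norm_num, by linarith, ?_⟩
  intro ρ ρbar hρ _ hρbar _
  rcases le_total ρbar ρ with h | h
  · exact key_lemma hγ hρbar h
  · obtain ⟨hl, hr⟩ := key_lemma hγ hρ h
    constructor
    · nlinarith [hl]
    · nlinarith [hr]
end

section
/- For γ > 1 there exist constants c₁, c₂ > 0 such that for all ρ, ρ̄ ∈ [0, C]: c₁(ρ^{γ−1} + ρ̄^{γ−1})(ρ − ρ̄)² ≤ ρ^{γ+1} − ρ̄^{γ+1} − (γ+1)ρ̄^γ(ρ − ρ̄) ≤ c₂(ρ^{γ−1} + ρ̄^{γ−1})(ρ − ρ̄)². -/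
open Real

lemma rpow_tangent {p x y : ℝ} (hp : 1 ≤ p) (hy : 0 < y) (hx : 0 ≤ x) :
    y ^ p + p * y ^ (p - 1) * (x - y) ≤ x ^ p := by
  have hs : (-1 : ℝ) ≤ x / y - 1 := by
    have : 0 ≤ x / y := div_nonneg hx hy.le
    linarith
  have hb := one_add_mul_self_le_rpow_one_add hs hp
  have h1 : (1 + (x / y - 1)) = x / y := by ring
  rw [h1, Real.div_rpow hx hy.le] at hb
  have hyp : 0 < y ^ p := Real.rpow_pos_of_pos hy p
  have h2 : (1 + p * (x / y - 1)) * y ^ p ≤ x ^ p := (le_div_iff₀ hyp).mp hb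
  have key : y ^ (p - 1) * y = y ^ p := by
    rw [← Real.rpow_add_one hy.ne' (p - 1), sub_add_cancel]
  calc y ^ p + p * y ^ (p - 1) * (x - y)
      = (1 + p * (x / y - 1)) * y ^ p := by
        field_simp
        linear_combination (p * (x - y)) * key
    _ ≤ x ^ p := h2

lemma key1 {z γ : ℝ} (hz : z ≠ 0) : z ^ (γ - 1) * z = z ^ γ := by
  rw [← Real.rpow_add_one hz (γ - 1), sub_add_cancel]

lemma key2 {z γ : ℝ} (hz : z ≠ 0) : z ^ γ * z = z ^ (γ + 1) := by
  rw [← Real.rpow_add_one hz γ]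

-- Lower bound, case a ≤ b, b > 0
lemma lower_le {γ a b : ℝ} (hγ : 1 < γ) (ha : 0 ≤ a) (hb : 0 < b) (hab : a ≤ b) :
    (1/2) * (a ^ (γ - 1) + b ^ (γ - 1)) * (a - b) ^ 2 ≤
      a ^ (γ + 1) - b ^ (γ + 1) - (γ + 1) * b ^ γ * (a - b) := by
  have hT : b ^ γ + γ * b ^ (γ - 1) * (a - b) ≤ a ^ γ := rpow_tangent hγ.le hb ha
  have h1 : a * (b ^ γ + γ * b ^ (γ - 1) * (a - b)) ≤ a * a ^ γ :=
    mul_le_mul_of_nonneg_left hT ha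
  have h2 : a * a ^ γ ≤ a ^ (γ + 1) := by
    rcases ha.eq_or_lt with h | h
    · simp [← h, Real.zero_rpow (by linarith : γ + 1 ≠ 0)]
    · rw [← key2 h.ne']; ring_nf; exact le_refl _
  have kb1 := key1 (γ := γ) hb.ne'
  have kb2 := key2 (γ := γ) hb.ne'
  have hid : a * (b ^ γ + γ * b ^ (γ - 1) * (a - b)) =
      b ^ (γ + 1) + (γ + 1) * b ^ γ * (a - b) + γ * (b ^ (γ - 1) * (a - b) ^ 2) := by
    rw [← kb2, ← kb1]; ring
  have hAB : a ^ (γ - 1) ≤ b ^ (γ - 1) :=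
    Real.rpow_le_rpow ha hab (by linarith)
  have hB : 0 ≤ b ^ (γ - 1) := Real.rpow_nonneg hb.le _
  have hsq : (0:ℝ) ≤ (a - b) ^ 2 := sq_nonneg _
  have hint1 : 0 ≤ (γ - 1) * (b ^ (γ - 1) * (a - b) ^ 2) :=
    mul_nonneg (by linarith) (mul_nonneg hB hsq)
  have hint2 : 0 ≤ (b ^ (γ - 1) - a ^ (γ - 1)) * (a - b) ^ 2 :=
    mul_nonneg (by linarith) hsq
  nlinarith [h1, h2, hid, hint1, hint2]

-- Lower bound, case b ≤ a, b > 0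
lemma lower_ge {γ a b : ℝ} (hγ : 1 < γ) (hb : 0 < b) (hab : b ≤ a) :
    (1/2) * (a ^ (γ - 1) + b ^ (γ - 1)) * (a - b) ^ 2 ≤
      a ^ (γ + 1) - b ^ (γ + 1) - (γ + 1) * b ^ γ * (a - b) := by
  have ha : 0 < a := lt_of_lt_of_le hb hab
  have hT : b ^ γ + γ * b ^ (γ - 1) * (a - b) ≤ a ^ γ := rpow_tangent hγ.le hb ha.le
  have h1 : b * (b ^ γ + γ * b ^ (γ - 1) * (a - b)) ≤ b * a ^ γ :=
    mul_le_mul_of_nonneg_left hT hb.le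
  have kb1 := key1 (γ := γ) hb.ne'
  have kb2 := key2 (γ := γ) hb.ne'
  have ka1 := key1 (γ := γ) ha.ne'
  have ka2 := key2 (γ := γ) ha.ne'
  have hid1 : b * (b ^ γ + γ * b ^ (γ - 1) * (a - b)) =
      b ^ (γ + 1) + γ * (b ^ γ * (a - b)) := by
    rw [← kb2, ← kb1]; ring
  have hBA : b ^ (γ - 1) ≤ a ^ (γ - 1) :=
    Real.rpow_le_rpow hb.le hab (by linarith)
  have hB : 0 ≤ b ^ (γ - 1) := Real.rpow_nonneg hb.le _
  have hsq : (0:ℝ) ≤ (a - b) ^ 2 := sq_nonneg _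
  -- b^γ (a-b) ≤ a^γ b - a^(γ-1) b²
  have h3 : b ^ γ * (a - b) ≤ a ^ γ * b - a ^ (γ - 1) * b ^ 2 := by
    have h3' := mul_le_mul_of_nonneg_right hBA
      (mul_nonneg hb.le (sub_nonneg.2 hab))
    have e1 : b ^ (γ - 1) * (b * (a - b)) = b ^ γ * (a - b) := by
      rw [← kb1]; ring
    have e2 : a ^ (γ - 1) * (b * (a - b)) = a ^ γ * b - a ^ (γ - 1) * b ^ 2 := by
      rw [← ka1]; ring
    linarith [e1 ▸ e2 ▸ h3']
  have hid2 : a ^ (γ + 1) =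
      a ^ (γ - 1) * (a - b) ^ 2 + 2 * (a ^ γ * b) - a ^ (γ - 1) * b ^ 2 := by
    rw [← ka2, ← ka1]; ring
  have hint2 : 0 ≤ (a ^ (γ - 1) - b ^ (γ - 1)) * (a - b) ^ 2 :=
    mul_nonneg (by linarith) hsq
  nlinarith [h1, hid1, h3, hid2, hint2]

-- Upper bound, case b ≤ a
lemma upper_ge {γ a b : ℝ} (hγ : 1 < γ) (hb : 0 ≤ b) (hab : b ≤ a) :
    a ^ (γ + 1) - b ^ (γ + 1) - (γ + 1) * b ^ γ * (a - b) ≤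
      γ * (γ + 1) * (a ^ (γ - 1) + b ^ (γ - 1)) * (a - b) ^ 2 := by
  rcases (le_trans hb hab).eq_or_lt with h | ha
  · have hb0 : b = 0 := le_antisymm (h ▸ hab) hb
    simp [← h, hb0, Real.zero_rpow (by linarith : γ + 1 ≠ 0),
      Real.zero_rpow (by linarith : γ ≠ 0)]
  · have T1 : a ^ (γ + 1) + (γ + 1) * a ^ (γ + 1 - 1) * (b - a) ≤ b ^ (γ + 1) :=
      rpow_tangent (by linarith) ha hb
    rw [add_sub_cancel_right] at T1
    have T2 : a ^ γ + γ * a ^ (γ - 1) * (b - a) ≤ b ^ γ :=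
      rpow_tangent hγ.le ha hb
    have hA : 0 ≤ a ^ (γ - 1) := Real.rpow_nonneg ha.le _
    have hB : 0 ≤ b ^ (γ - 1) := Real.rpow_nonneg hb _
    have hsq : (0:ℝ) ≤ (a - b) ^ 2 := sq_nonneg _
    have h4 : (a ^ γ - b ^ γ) * (a - b) ≤ γ * a ^ (γ - 1) * (a - b) ^ 2 := by
      have h5 : a ^ γ - b ^ γ ≤ γ * a ^ (γ - 1) * (a - b) := by linarith
      nlinarith [mul_le_mul_of_nonneg_right h5 (sub_nonneg.2 hab)]
    have h4' := mul_le_mul_of_nonneg_left h4 (by linarith : (0:ℝ) ≤ γ + 1)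
    have hint : 0 ≤ γ * (γ + 1) * (b ^ (γ - 1) * (a - b) ^ 2) :=
      mul_nonneg (by nlinarith) (mul_nonneg hB hsq)
    nlinarith [T1, h4', hint]

-- Upper bound, case a ≤ b, a > 0
lemma upper_le {γ a b : ℝ} (hγ : 1 < γ) (ha : 0 < a) (hab : a ≤ b) :
    a ^ (γ + 1) - b ^ (γ + 1) - (γ + 1) * b ^ γ * (a - b) ≤
      γ * (γ + 1) * (a ^ (γ - 1) + b ^ (γ - 1)) * (a - b) ^ 2 := by
  have hbpos : 0 < b := lt_of_lt_of_le ha hab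
  have T1 : a ^ (γ + 1) + (γ + 1) * a ^ (γ + 1 - 1) * (b - a) ≤ b ^ (γ + 1) :=
    rpow_tangent (by linarith) ha hbpos.le
  rw [add_sub_cancel_right] at T1
  have T2 : b ^ γ + γ * b ^ (γ - 1) * (a - b) ≤ a ^ γ :=
    rpow_tangent hγ.le hbpos ha.le
  have hA : 0 ≤ a ^ (γ - 1) := Real.rpow_nonneg ha.le _
  have hB : 0 ≤ b ^ (γ - 1) := Real.rpow_nonneg hbpos.le _
  have hsq : (0:ℝ) ≤ (a - b) ^ 2 := sq_nonneg _
  have h4 : (a ^ γ - b ^ γ) * (a - b) ≤ γ * b ^ (γ - 1) * (a - b) ^ 2 := by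
    have h5 : γ * b ^ (γ - 1) * (a - b) ≤ a ^ γ - b ^ γ := by linarith
    nlinarith [mul_le_mul_of_nonpos_right h5 (by linarith : a - b ≤ 0)]
  have h4' := mul_le_mul_of_nonneg_left h4 (by linarith : (0:ℝ) ≤ γ + 1)
  have hint : 0 ≤ γ * (γ + 1) * (a ^ (γ - 1) * (a - b) ^ 2) :=
    mul_nonneg (by nlinarith) (mul_nonneg hA hsq)
  nlinarith [T1, h4', hint]

-- Lower bound, b = 0 case
lemma lower_b0 {γ a : ℝ} (hγ : 1 < γ) (ha : 0 ≤ a) :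
    (1/2) * (a ^ (γ - 1) + (0:ℝ) ^ (γ - 1)) * (a - 0) ^ 2 ≤
      a ^ (γ + 1) - (0:ℝ) ^ (γ + 1) - (γ + 1) * (0:ℝ) ^ γ * (a - 0) := by
  rw [Real.zero_rpow (by linarith : γ - 1 ≠ 0),
      Real.zero_rpow (by linarith : γ + 1 ≠ 0),
      Real.zero_rpow (by linarith : γ ≠ 0)]
  rcases ha.eq_or_lt with h | h
  · simp [← h, Real.zero_rpow (by linarith : γ - 1 ≠ 0),
      Real.zero_rpow (by linarith : γ + 1 ≠ 0)]
  · have ka1 := key1 (γ := γ) h.ne'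
    have ka2 := key2 (γ := γ) h.ne'
    have hid : a ^ (γ + 1) = a ^ (γ - 1) * a ^ 2 := by
      rw [← ka2, ← ka1]; ring
    have hA : 0 ≤ a ^ (γ - 1) := Real.rpow_nonneg ha _
    nlinarith [hid, mul_nonneg hA (sq_nonneg a)]

theorem relative_entropy_two_sided_bound (γ C : ℝ) (hγ : 1 < γ) (hC : 0 < C) :
    ∃ c₁ c₂ : ℝ, 0 < c₁ ∧ 0 < c₂ ∧
      ∀ ρ ρbar : ℝ, 0 ≤ ρ → ρ ≤ C → 0 ≤ ρbar → ρbar ≤ C →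
        c₁ * (ρ ^ (γ - 1) + ρbar ^ (γ - 1)) * (ρ - ρbar) ^ 2 ≤
          ρ ^ (γ + 1) - ρbar ^ (γ + 1) - (γ + 1) * ρbar ^ γ * (ρ - ρbar) ∧
        ρ ^ (γ + 1) - ρbar ^ (γ + 1) - (γ + 1) * ρbar ^ γ * (ρ - ρbar) ≤
          c₂ * (ρ ^ (γ - 1) + ρbar ^ (γ - 1)) * (ρ - ρbar) ^ 2 := by
  refine ⟨1/2, γ * (γ + 1), by norm_num, by nlinarith, ?_⟩
  intro ρ ρbar hρ0 _ hb0 _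
  constructor
  · rcases hb0.eq_or_lt with h | h
    · rw [← h]; exact lower_b0 hγ hρ0
    · rcases le_total ρ ρbar with hab | hab
      · exact lower_le hγ hρ0 h hab
      · exact lower_ge hγ h hab
  · rcases le_total ρbar ρ with hab | hab
    · exact upper_ge hγ hb0 hab
    · rcases hρ0.eq_or_lt with h | h
      · rw [← h]
        rw [Real.zero_rpow (by linarith : γ - 1 ≠ 0),
            Real.zero_rpow (by linarith : γ + 1 ≠ 0)]
        rcases hb0.eq_or_lt with hb | hb
        · simp [← hb, Real.zero_rpow (by linarith : γ - 1 ≠ 0),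
            Real.zero_rpow (by linarith : γ + 1 ≠ 0),
            Real.zero_rpow (by linarith : γ ≠ 0)]
        · have kb1 := key1 (γ := γ) hb.ne'
          have kb2 := key2 (γ := γ) hb.ne'
          have e1 : (γ + 1) * ρbar ^ γ * ρbar - ρbar ^ (γ + 1) =
              γ * (ρbar ^ (γ - 1) * ρbar ^ 2) := by
            rw [← kb2, ← kb1]; ring
          have hB : 0 ≤ ρbar ^ (γ - 1) := Real.rpow_nonneg hb0 _
          have key : 0 ≤ γ ^ 2 * (ρbar ^ (γ - 1) * ρbar ^ 2) :=
            mul_nonneg (sq_nonneg γ) (mul_nonneg hB (sq_nonneg ρbar))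
          nlinarith [e1, key]
      · exact upper_le hγ h hab
end

section
/- The function ρ̄(x,t) = (1+t)^{−(λ+1)/(γ+1)} · max(A − B ξ², 0)^{1/(γ−1)}, with ξ = x (1+t)^{−(λ+1)/(γ+1)} and B = (λ+1)(γ−1)/(2κγ(γ+1)), satisfies the porous medium equation ρ̄_t = κ(1+t)^λ (ρ̄^γ)_{xx} pointwise at every point (x,t) with |x| < √(A/B)·(1+t)^{(λ+1)/(γ+1)} and t > 0. -/
/-!
With `T = 1 + t` and `α = (λ + 1)/(γ + 1)`, the ansatz `ρ = T^(-α) f(x T^(-α))` turns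
`ρ_t = κ T^λ (ρ^γ)_xx` into `κ (f^γ)'' + α (ξ f)' = 0`, because `λ - α (γ + 2) = -α - 1` makes all
powers of `T` agree. For `f = (A - B ξ²)^m` with `m = 1/(γ - 1)` we have `f^γ = (A - B ξ²)^(m + 1)`,
so `(f^γ)' = -2B(m + 1) ξ f`; the value of `B` makes `2 κ B (m + 1) = α`, which is the once-integrated
equation `κ (f^γ)' + α ξ f = 0`.
-/

open Filter Topology

lemma deriv_comp_mul_const (f : ℝ → ℝ) (k x : ℝ) :
    deriv (fun z => f (z * k)) x = k * deriv f (x * k) := by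
  simp_rw [mul_comm _ k]
  exact deriv_comp_mul_left k f x

lemma deriv_deriv_const_mul_comp_mul_const (f : ℝ → ℝ) (c k x : ℝ) :
    deriv (fun y => deriv (fun z => c * f (z * k)) y) x = c * k ^ 2 * deriv (deriv f) (x * k) := by
  have h1 : (fun y => deriv (fun z => c * f (z * k)) y) = fun y => c * k * deriv f (y * k) := by
    funext y
    rw [deriv_const_mul_field, deriv_comp_mul_const, mul_assoc]
  rw [h1, deriv_const_mul_field, deriv_comp_mul_const, sq, mul_assoc, mul_assoc, mul_assoc]

lemma hasDerivAt_selfSimilar {f : ℝ → ℝ} {f' α x t : ℝ} (ht : 0 < 1 + t)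
    (hf : HasDerivAt f f' (x * (1 + t) ^ (-α))) :
    HasDerivAt (fun s => (1 + s) ^ (-α) * f (x * (1 + s) ^ (-α)))
      (-α * (1 + t) ^ (-α - 1) * (f (x * (1 + t) ^ (-α)) + x * (1 + t) ^ (-α) * f')) t := by
  have hT : HasDerivAt (fun s : ℝ => (1 + s) ^ (-α)) (-α * (1 + t) ^ (-α - 1)) t := by
    simpa using ((hasDerivAt_id t).const_add 1).rpow_const (p := -α) (Or.inl ht.ne')
  refine (hT.mul (hf.comp t (hT.const_mul x))).congr_deriv ?_
  simp only [Function.comp_apply]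
  ring

/-- `g` plays the role of the profile of `ρ ^ γ`; `hg` is the profile equation
`κ (f ^ γ)'' + α (ξ f)' = 0` integrated once. -/
lemma selfSimilar_solves_PME {f g : ℝ → ℝ} {f' α γ κ lam x t : ℝ} (ht : 0 < 1 + t)
    (hα : α * (γ + 1) = lam + 1) (hf : HasDerivAt f f' (x * (1 + t) ^ (-α)))
    (hg : (fun η => κ * deriv g η) =ᶠ[𝓝 (x * (1 + t) ^ (-α))] fun η => -α * (η * f η)) :
    deriv (fun s => (1 + s) ^ (-α) * f (x * (1 + s) ^ (-α))) t =
      κ * (1 + t) ^ lam *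
        deriv (fun y => deriv (fun z => (1 + t) ^ (-α * γ) * g (z * (1 + t) ^ (-α))) y) x := by
  set ξ := x * (1 + t) ^ (-α) with hξ
  have hflux : κ * deriv (deriv g) ξ = -α * (1 * f ξ + ξ * f') := by
    rw [← deriv_const_mul_field, hg.deriv_eq]
    exact (((hasDerivAt_id' ξ).mul hf).const_mul (-α)).deriv
  have hexp : (1 + t) ^ lam * (1 + t) ^ (-α * γ) * ((1 + t) ^ (-α)) ^ 2 = (1 + t) ^ (-α - 1) := by
    rw [← Real.rpow_natCast, ← Real.rpow_mul ht.le, ← Real.rpow_add ht, ← Real.rpow_add ht]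
    congr 1
    linear_combination -hα
  rw [(hasDerivAt_selfSimilar ht hf).deriv, deriv_deriv_const_mul_comp_mul_const, ← hξ]
  linear_combination -((1 + t) ^ lam * (1 + t) ^ (-α * γ) * ((1 + t) ^ (-α)) ^ 2) * hflux
    + α * (f ξ + ξ * f') * hexp

lemma eventually_sub_mul_sq_pos {A B ξ : ℝ} (h : 0 < A - B * ξ ^ 2) :
    ∀ᶠ η in 𝓝 ξ, 0 < A - B * η ^ 2 :=
  (continuous_const.sub (continuous_const.mul (continuous_pow 2))).continuousAt.eventually
    (lt_mem_nhds h)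

noncomputable def barenblattProfile (A B m ξ : ℝ) : ℝ := max (A - B * ξ ^ 2) 0 ^ m

lemma barenblattProfile_rpow (A B m γ ξ : ℝ) :
    barenblattProfile A B m ξ ^ γ = barenblattProfile A B (m * γ) ξ :=
  (Real.rpow_mul (le_max_right _ _) m γ).symm

lemma barenblattProfile_eq_of_pos {A B m ξ : ℝ} (h : 0 < A - B * ξ ^ 2) :
    barenblattProfile A B m ξ = (A - B * ξ ^ 2) ^ m := by
  rw [barenblattProfile, max_eq_left h.le]

lemma hasDerivAt_barenblattProfile {A B m ξ : ℝ} (h : 0 < A - B * ξ ^ 2) :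
    HasDerivAt (barenblattProfile A B m) (-(2 * B * ξ) * m * (A - B * ξ ^ 2) ^ (m - 1)) ξ := by
  have hu : HasDerivAt (fun η => A - B * η ^ 2) (-(2 * B * ξ)) ξ :=
    (((hasDerivAt_pow 2 ξ).const_mul B).const_sub A).congr_deriv (by norm_num; ring)
  refine (hu.rpow_const (p := m) (Or.inl h.ne')).congr_of_eventuallyEq ?_
  filter_upwards [eventually_sub_mul_sq_pos h] with η hη using barenblattProfile_eq_of_pos hη

lemma sub_mul_sq_pos_of_abs_lt_sqrt {A B ξ : ℝ} (hB : 0 < B) (hξ : |ξ| < √(A / B)) :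
    0 < A - B * ξ ^ 2 := by
  have h := (lt_div_iff₀ hB).1 (sq_abs ξ ▸ (Real.lt_sqrt (abs_nonneg ξ)).1 hξ)
  linarith

lemma deriv_barenblattProfile_eventuallyEq {A B m ξ₀ : ℝ} (h : 0 < A - B * ξ₀ ^ 2) :
    deriv (barenblattProfile A B (m + 1)) =ᶠ[𝓝 ξ₀]
      fun ξ => -(2 * B * (m + 1)) * (ξ * barenblattProfile A B m ξ) := by
  filter_upwards [eventually_sub_mul_sq_pos h] with ξ hξ
  rw [(hasDerivAt_barenblattProfile hξ).deriv, barenblattProfile_eq_of_pos hξ, add_sub_cancel_right]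
  ring

theorem barenblatt_solves_PME_general (γ κ lam A B : ℝ)
    (hγ1 : 1 < γ) (hκ : 0 < κ) (hlam1 : 0 < lam)
    (hB : B = (lam + 1) * (γ - 1) / (2 * κ * γ * (γ + 1)))
    (ρbar : ℝ → ℝ → ℝ)
    (hρ : ∀ x t : ℝ, ρbar x t =
      (1 + t) ^ (-((lam + 1) / (γ + 1))) *
        (max (A - B * (x * (1 + t) ^ (-((lam + 1) / (γ + 1)))) ^ 2) 0) ^ (1 / (γ - 1))) :
    ∀ x t : ℝ, 0 < t → |x| < Real.sqrt (A / B) * (1 + t) ^ ((lam + 1) / (γ + 1)) →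
      deriv (fun s => ρbar x s) t =
        κ * (1 + t) ^ lam * deriv (fun x' => deriv (fun x'' => ρbar x'' t ^ γ) x') x := by
  intro x t ht hx
  set α := (lam + 1) / (γ + 1) with hα_def
  set p := 1 / (γ - 1) with hp_def
  have hT : 0 < 1 + t := by linarith
  have hγ : γ - 1 ≠ 0 := by linarith
  have hpγ : p * γ = p + 1 := by
    rw [hp_def]; field_simp; ring
  have hα : α = 2 * κ * B * (p + 1) := by
    rw [hα_def, hp_def, hB]; field_simp; ring
  have hξ : 0 < A - B * (x * (1 + t) ^ (-α)) ^ 2 := by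
    refine sub_mul_sq_pos_of_abs_lt_sqrt
      (hB ▸ div_pos (mul_pos (by linarith) (by linarith)) (by positivity)) ?_
    rwa [abs_mul, abs_of_pos (Real.rpow_pos_of_pos hT _), Real.rpow_neg hT.le,
      mul_inv_lt_iff₀ (Real.rpow_pos_of_pos hT _)]
  have hργ : (fun y => ρbar y t ^ γ) =
      fun y => (1 + t) ^ (-α * γ) * barenblattProfile A B (p + 1) (y * (1 + t) ^ (-α)) := by
    funext y
    rw [hρ, Real.mul_rpow (Real.rpow_nonneg hT.le _) (Real.rpow_nonneg (le_max_right _ _) _),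
      ← Real.rpow_mul hT.le, ← hpγ, ← barenblattProfile_rpow]
    rfl
  rw [show (fun s => ρbar x s) = _ from funext fun s => hρ x s, hργ]
  refine selfSimilar_solves_PME hT (by rw [hα_def]; field_simp) (hasDerivAt_barenblattProfile hξ) ?_
  filter_upwards [deriv_barenblattProfile_eventuallyEq (m := p) hξ] with η hη
  rw [hη, hα]
  ring

theorem barenblatt_solves_PME (γ κ lam A B : ℝ)
    (hγ1 : 1 < γ) (hγ3 : γ < 3) (hκ : 0 < κ) (hlam1 : 0 < lam) (hlam2 : lam < 1)
    (hA : 0 < A) (hB : B = (lam + 1) * (γ - 1) / (2 * κ * γ * (γ + 1)))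
    (ρbar : ℝ → ℝ → ℝ)
    (hρ : ∀ x t : ℝ, ρbar x t =
      (1 + t) ^ (-((lam + 1) / (γ + 1))) *
        (max (A - B * (x * (1 + t) ^ (-((lam + 1) / (γ + 1)))) ^ 2) 0) ^ (1 / (γ - 1))) :
    ∀ x t : ℝ, 0 < t → |x| < Real.sqrt (A / B) * (1 + t) ^ ((lam + 1) / (γ + 1)) →
      deriv (fun s => ρbar x s) t =
        κ * (1 + t) ^ lam * deriv (fun x' => deriv (fun x'' => ρbar x'' t ^ γ) x') x :=
  barenblatt_solves_PME_general γ κ lam A B hγ1 hκ hlam1 hB ρbar hρ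
end

section
/- Define A(ρ,m) for ρ > 0, u = m/ρ, θ = (γ−1)/2, l = (3−γ)/(2(γ−1)), g(ξ) = |ξ|^{2γ/(γ−1)}, by A(ρ,m) = ρ ∫_{−1}^{1} [g(u + zρ^θ) − g(zρ^θ) − g′(zρ^θ)u − ½ g″(zρ^θ)u²](1 − z²)^l dz. Then A(ρ,m) ≥ 0 for all ρ > 0 and m ∈ ℝ. -/
/-!
Pairing `z` with `-z` in the integral, the weight and `g''` are even and `g'` is odd, so the
integrand becomes `(1 - z²)^l` times the symmetric second difference
`g (a + u) + g (a - u) - 2 g a - g'' a u²`, where `a = z ρ^θ` and `u = m / ρ`; the first-order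
terms cancel. That difference is nonnegative because `g'' = p (p - 1) |x|^(p - 2)` is convex for
`p = 2γ / (γ - 1) > 3`: as a function of `u` it vanishes with its derivative at `0`, and its
second derivative `g'' (a + u) + g'' (a - u) - 2 g'' a` is nonnegative.
-/

open MeasureTheory Set

theorem intervalIntegral.integral_nonneg_of_add_comp_neg_nonneg {f : ℝ → ℝ} {a : ℝ}
    (ha : 0 ≤ a) (hf : ∀ z ∈ Icc (-a) a, 0 ≤ f z + f (-z)) : 0 ≤ ∫ z in -a..a, f z := by
  by_cases hint : IntervalIntegrable f volume (-a) a
  · have hint_neg : IntervalIntegrable (fun z => f (-z)) volume (-a) a := by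
      simpa using ((IntervalIntegrable.iff_comp_neg).1 hint).symm
    have hreflect : ∫ z in -a..a, f (-z) = ∫ z in -a..a, f z := by simp
    have hsum : 0 ≤ ∫ z in -a..a, f z + f (-z) := integral_nonneg (by linarith) hf
    rw [integral_add hint hint_neg, hreflect] at hsum
    linarith
  · rw [integral_undef hint]

theorem ConvexOn.two_mul_le_add_add_sub {h : ℝ → ℝ} (hh : ConvexOn ℝ univ h) (a t : ℝ) :
    2 * h a ≤ h (a + t) + h (a - t) := by
  have hmid := hh.2 (mem_univ (a + t)) (mem_univ (a - t)) (by norm_num : (0 : ℝ) ≤ 1 / 2)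
    (by norm_num : (0 : ℝ) ≤ 1 / 2) (by norm_num)
  simp only [smul_eq_mul] at hmid
  ring_nf at hmid ⊢
  linarith

theorem convexOn_abs_rpow {r : ℝ} (hr : 1 ≤ r) : ConvexOn ℝ univ fun x : ℝ => |x| ^ r := by
  have himage : (norm : ℝ → ℝ) '' univ = Ici 0 := by
    ext y
    refine ⟨by rintro ⟨x, -, rfl⟩; exact norm_nonneg x, fun hy => ⟨y, mem_univ y, ?_⟩⟩
    simpa using abs_of_nonneg (mem_Ici.1 hy)
  have hconv : ConvexOn ℝ univ ((fun y : ℝ => y ^ r) ∘ (norm : ℝ → ℝ)) :=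
    ConvexOn.comp (by rw [himage]; exact convexOn_rpow hr) convexOn_univ_norm
      (by rw [himage]; exact Real.monotoneOn_rpow_Ici_of_exponent_nonneg (by linarith))
  exact hconv

theorem hasDerivAt_abs_rpow_mul_self (x : ℝ) {q : ℝ} (hq : 1 < q) :
    HasDerivAt (fun x : ℝ => |x| ^ q * x) ((q + 1) * |x| ^ q) x := by
  refine ((hasDerivAt_abs_rpow x hq).mul (hasDerivAt_id' x)).congr_deriv ?_
  rcases eq_or_ne x 0 with rfl | hx
  · simp [Real.zero_rpow (by linarith : q ≠ 0)]
  · have : |x| ^ q = |x| ^ (q - 2) * x ^ 2 := by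
      rw [← sq_abs x, ← Real.rpow_natCast, ← Real.rpow_add (abs_pos.2 hx)]; norm_num
    rw [this]; ring

theorem mul_sq_le_add_add_sub_of_convexOn_deriv {f f' f'' : ℝ → ℝ}
    (hf : ∀ x, HasDerivAt f (f' x) x) (hf' : ∀ x, HasDerivAt f' (f'' x) x)
    (hconv : ConvexOn ℝ univ f'') (a u : ℝ) :
    f'' a * u ^ 2 ≤ f (a + u) + f (a - u) - 2 * f a := by
  wlog hu : 0 ≤ u generalizing u
  · have hneg := this (-u) (by linarith)
    rw [neg_sq, ← sub_eq_add_neg, sub_neg_eq_add] at hneg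
    linarith
  set K : ℝ → ℝ := fun t => f' (a + t) - f' (a - t) - 2 * f'' a * t
  have hK_deriv : ∀ t, HasDerivAt K (f'' (a + t) + f'' (a - t) - 2 * f'' a) t := fun t => by
    refine ((((hf' _).comp_const_add a t).sub ((hf' _).comp_const_sub a t)).sub
      ((hasDerivAt_id' t).const_mul (2 * f'' a))).congr_deriv ?_
    ring
  have hK_nonneg : ∀ t, 0 ≤ t → 0 ≤ K t := fun t ht => by
    have hK_mono := monotone_of_hasDerivAt_nonneg hK_deriv fun t => by
      simpa using hconv.two_mul_le_add_add_sub a t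
    simpa [K] using hK_mono ht
  set H : ℝ → ℝ := fun t => f (a + t) + f (a - t) - 2 * f a - f'' a * t ^ 2
  have hH_deriv : ∀ t, HasDerivAt H (K t) t := fun t => by
    refine (((((hf _).comp_const_add a t).add ((hf _).comp_const_sub a t)).sub_const
      (2 * f a)).sub ((hasDerivAt_pow 2 t).const_mul (f'' a))).congr_deriv ?_
    simp only [K]
    ring
  have hH_mono : MonotoneOn H (Ici 0) :=
    monotoneOn_of_hasDerivWithinAt_nonneg (convex_Ici 0)
      (fun t _ => (hH_deriv t).continuousAt.continuousWithinAt)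
      (fun t _ => (hH_deriv t).hasDerivWithinAt)
      (fun t ht => hK_nonneg t (interior_subset ht))
  have hH_u := hH_mono self_mem_Ici hu hu
  simp only [H, add_zero, sub_zero] at hH_u
  linarith

theorem A_nonneg_general (γ θ l : ℝ) (hγ1 : 1 < γ) (hγ3 : γ < 3)
    (g : ℝ → ℝ) (hg : ∀ ξ : ℝ, g ξ = |ξ| ^ (2 * γ / (γ - 1)))
    (Afun : ℝ → ℝ → ℝ)
    (hA : ∀ ρ m : ℝ, Afun ρ m = ρ * ∫ z in (-1 : ℝ)..1,
      (g (m / ρ + z * ρ ^ θ) - g (z * ρ ^ θ) - deriv g (z * ρ ^ θ) * (m / ρ)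
        - (1 / 2) * deriv (deriv g) (z * ρ ^ θ) * (m / ρ) ^ 2) * (1 - z ^ 2) ^ l) :
    ∀ ρ m : ℝ, 0 < ρ → 0 ≤ Afun ρ m := by
  intro ρ m hρ
  set p := 2 * γ / (γ - 1)
  have hp : 3 < p := by rw [lt_div_iff₀ (by linarith)]; linarith
  have hg_eq : g = fun ξ => |ξ| ^ p := funext hg
  have hg' (x : ℝ) : HasDerivAt g (p * (|x| ^ (p - 2) * x)) x := by
    rw [hg_eq, ← mul_assoc]; exact hasDerivAt_abs_rpow x (by linarith)
  have hg'' (x : ℝ) :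
      HasDerivAt (fun x => p * (|x| ^ (p - 2) * x)) (p * (p - 1) * |x| ^ (p - 2)) x := by
    refine ((hasDerivAt_abs_rpow_mul_self x (by linarith)).const_mul p).congr_deriv ?_
    ring
  have hconv : ConvexOn ℝ univ fun x => p * (p - 1) * |x| ^ (p - 2) :=
    (convexOn_abs_rpow (by linarith)).smul (by nlinarith)
  rw [hA, funext fun x => (hg' x).deriv, funext fun x => (hg'' x).deriv]
  refine mul_nonneg hρ.le
    (intervalIntegral.integral_nonneg_of_add_comp_neg_nonneg zero_le_one fun z hz => ?_)
  have hw : 0 ≤ (1 - z ^ 2) ^ l := Real.rpow_nonneg (by nlinarith [hz.1, hz.2]) l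
  have hsecond_diff := mul_sq_le_add_add_sub_of_convexOn_deriv hg' hg'' hconv (z * ρ ^ θ) (m / ρ)
  simp only [hg] at hsecond_diff
  simp only [neg_mul, abs_neg, neg_sq, hg]
  rw [← sub_eq_add_neg, abs_sub_comm, add_comm (m / ρ)]
  linear_combination (mul_le_mul_of_nonneg_right hsecond_diff hw)

theorem A_nonneg (γ θ l : ℝ) (hγ1 : 1 < γ) (hγ3 : γ < 3)
    (hθ : θ = (γ - 1) / 2) (hl : l = (3 - γ) / (2 * (γ - 1)))
    (g : ℝ → ℝ) (hg : ∀ ξ : ℝ, g ξ = |ξ| ^ (2 * γ / (γ - 1)))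
    (Afun : ℝ → ℝ → ℝ)
    (hA : ∀ ρ m : ℝ, Afun ρ m = ρ * ∫ z in (-1 : ℝ)..1,
      (g (m / ρ + z * ρ ^ θ) - g (z * ρ ^ θ) - deriv g (z * ρ ^ θ) * (m / ρ)
        - (1 / 2) * deriv (deriv g) (z * ρ ^ θ) * (m / ρ) ^ 2) * (1 - z ^ 2) ^ l) :
    ∀ ρ m : ℝ, 0 < ρ → 0 ≤ Afun ρ m :=
  A_nonneg_general γ θ l hγ1 hγ3 g hg Afun hA
end

section
/- With the iteration μ̃_{k+1} = min{1 + θ̃_k, 1 + λ/2 − (λ+1)/(2(γ+1)) + θ̃_k/2}, θ̃_k = min{μ̃_k − λ, λ} for λ ∈ (0, γ/(γ+2)], there exists k₁ ∈ ℕ such that θ̃_{k₁} > (λγ − 1)/(γ+1). -/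
theorem iteration_escapes_threshold (γ lam : ℝ) (hγ1 : 1 < γ) (hγ3 : γ < 3)
    (hlam1 : 0 < lam) (hlam2 : lam ≤ γ / (γ + 2))
    (μ θ : ℕ → ℝ) (hθ0 : θ 0 = 0)
    (hμ : ∀ k : ℕ, μ (k + 1) = min (1 + θ k) (1 + lam / 2 - (lam + 1) / (2 * (γ + 1)) + θ k / 2))
    (hθ : ∀ k : ℕ, θ (k + 1) = min (μ (k + 1) - lam) lam) :
    ∃ k₁ : ℕ, (lam * γ - 1) / (γ + 1) < θ k₁ := by
  by_contra hcon
  push_neg at hcon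
  set T := (lam * γ - 1) / (γ + 1) with hT
  have hγ0 : (0:ℝ) < γ + 1 := by linarith
  have hlam_lt1 : lam < 1 := by
    have h2 : γ / (γ + 2) < 1 := by
      rw [div_lt_one (by linarith)]; linarith
    linarith
  have hTlam : T < lam := by
    rw [hT, div_lt_iff₀ hγ0]; nlinarith
  have key : ∀ k : ℕ, (k : ℝ) * (1 - lam) ≤ θ k := by
    intro k
    induction k with
    | zero => simp [hθ0]
    | succ n ih =>
      have hn := hcon n
      have hn1 := hcon (n+1)
      have hminlt : θ (n+1) < lam := lt_of_le_of_lt hn1 hTlam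
      rw [hθ n] at hminlt ⊢
      have heq : min (μ (n+1) - lam) lam = μ (n+1) - lam := by
        rcases min_cases (μ (n+1) - lam) lam with ⟨h1, _⟩ | ⟨h1, _⟩
        · exact h1
        · exfalso; rw [h1] at hminlt; exact lt_irrefl _ hminlt
      rw [heq, hμ n]
      rw [hT, le_div_iff₀ hγ0] at hn
      have hD : (lam + 1) / (2 * (γ + 1)) ≤ lam / 2 - θ n / 2 := by
        rw [div_le_iff₀ (by linarith : (0:ℝ) < 2 * (γ + 1))]
        nlinarith
      rcases min_cases (1 + θ n) (1 + lam / 2 - (lam + 1) / (2 * (γ + 1)) + θ n / 2) with ⟨h1, _⟩ | ⟨h1, _⟩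
      · rw [h1]; push_cast; linarith
      · rw [h1]; push_cast; linarith
  obtain ⟨k, hk⟩ := exists_nat_gt (T / (1 - lam))
  have h1lam : (0:ℝ) < 1 - lam := by linarith
  have hk1 := key k
  have hk2 := hcon k
  have hmul : T / (1 - lam) * (1 - lam) = T := by field_simp
  nlinarith
end

section
/- With the iteration above for λ ∈ (0, γ/(γ+2)], there exists k₂ ∈ ℕ such that μ̃_{k₂} − λ ≥ λ; consequently the iteration stabilizes with limiting value μ̃ = 1 + λ − (λ+1)/(2(γ+1)). -/
theorem iteration_stabilizes (γ lam : ℝ) (hγ1 : 1 < γ) (hγ3 : γ < 3)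
    (hlam1 : 0 < lam) (hlam2 : lam ≤ γ / (γ + 2))
    (μ θ : ℕ → ℝ) (hθ0 : θ 0 = 0)
    (hμ : ∀ k : ℕ, μ (k + 1) = min (1 + θ k) (1 + lam / 2 - (lam + 1) / (2 * (γ + 1)) + θ k / 2))
    (hθ : ∀ k : ℕ, θ (k + 1) = min (μ (k + 1) - lam) lam) :
    (∃ k₂ : ℕ, lam ≤ μ k₂ - lam) ∧
      ∃ N : ℕ, ∀ k : ℕ, N ≤ k → μ k = 1 + lam - (lam + 1) / (2 * (γ + 1)) := by
  have hγ2 : (0:ℝ) < γ + 1 := by linarith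
  have hγ4 : (0:ℝ) < γ + 2 := by linarith
  have hlam1' : lam < 1 := lt_of_le_of_lt hlam2 (by rw [div_lt_one hγ4]; linarith)
  have h2 : lam * (γ + 2) ≤ γ := by
    rw [le_div_iff₀ hγ4] at hlam2; exact hlam2
  set F : ℝ := (lam + 1) / (2 * (γ + 1)) with hFdef
  have hFnn : 0 ≤ F := div_nonneg (by linarith) (by linarith)
  have hFeq : F * (2 * (γ + 1)) = lam + 1 :=
    div_mul_cancel₀ _ (by positivity)
  have hδpos : 0 < 1 - lam - F := by
    nlinarith [mul_le_mul_of_nonneg_right h2 (show (0:ℝ) ≤ 2*γ+3 by linarith)]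
  set δ : ℝ := 1 - lam - F with hδdef
  have hkey : lam ≤ 1 - F := by linarith
  have hbound : ∀ k : ℕ, min lam ((k:ℝ) * δ) ≤ θ k ∧ θ k ≤ lam := by
    intro k
    induction k with
    | zero =>
      constructor
      · simpa [hθ0] using min_le_right lam 0
      · rw [hθ0]; linarith
    | succ k ih =>
      obtain ⟨ih1, ih2⟩ := ih
      constructor
      · rw [hθ]
        refine le_min ?_ (min_le_left _ _)
        rw [hμ, le_sub_iff_add_le, le_min_iff]
        have hm1 := min_le_left lam (((k:ℝ)+1) * δ)
        have hm2 := min_le_right lam (((k:ℝ)+1) * δ)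
        push_cast
        rcases le_or_gt lam ((k:ℝ) * δ) with h | h
        · have hθk : θ k = lam := le_antisymm ih2 (by
            have := ih1; rwa [min_eq_left h] at this)
          rw [hθk]
          constructor <;> [linarith; linarith]
        · have hθk : (k:ℝ) * δ ≤ θ k := by
            have := ih1; rwa [min_eq_right h.le] at this
          constructor
          · nlinarith
          · nlinarith
      · rw [hθ]; exact min_le_right _ _
  have hmuval : ∀ k : ℕ, θ k = lam → μ (k+1) = 1 + lam - F := by
    intro k h
    rw [hμ, h, min_eq_right (by linarith)]
    ring
  have hθstep : ∀ k : ℕ, θ k = lam → θ (k+1) = lam := by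
    intro k h
    rw [hθ, hmuval k h, min_eq_right (by linarith)]
  set K : ℕ := ⌈lam / δ⌉₊ with hKdef
  have hK : lam ≤ (K:ℝ) * δ := by
    rw [← div_le_iff₀ hδpos]
    exact Nat.le_ceil _
  have hθK : θ K = lam := le_antisymm (hbound K).2 (by
    have := (hbound K).1; rwa [min_eq_left hK] at this)
  have hθall : ∀ j : ℕ, K ≤ j → θ j = lam := by
    intro j hj
    induction j with
    | zero => exact (Nat.le_zero.mp hj) ▸ hθK
    | succ j ih =>
      rcases Nat.eq_or_lt_of_le hj with h | h
      · exact h ▸ hθK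
      · exact hθstep j (ih (Nat.lt_succ_iff.mp h))
  refine ⟨⟨K + 1, ?_⟩, K + 1, ?_⟩
  · rw [hmuval K hθK]; linarith
  · intro k hk
    obtain ⟨j, rfl⟩ : ∃ j, k = j + 1 := ⟨k - 1, by omega⟩
    exact hmuval j (hθall j (by omega))
end

section
/- For the generalized Barenblatt profile, for every t ≥ 0 and b > 1, ∫_{Ω₀} ρ̄(x,t)^{1−γ} dx ≤ C (1+t)^{γ(λ+1)/(γ+1)} ln(1+t), where Ω₀ = {x : |x| ≤ √(A/B)((1+t)^{(λ+1)/(γ+1)} − (1+t)^{−b})}. -/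
open MeasureTheory

theorem barenblatt_inverse_integral_log (γ lam A B : ℝ)
    (hγ1 : 1 < γ) (hγ3 : γ < 3) (hlam1 : 0 < lam) (hlam2 : lam < 1)
    (hA : 0 < A) (hB : 0 < B)
    (ρbar : ℝ → ℝ → ℝ)
    (hρ : ∀ x t : ℝ, ρbar x t =
      (1 + t) ^ (-((lam + 1) / (γ + 1))) *
        (max (A - B * (x * (1 + t) ^ (-((lam + 1) / (γ + 1)))) ^ 2) 0) ^ (1 / (γ - 1))) :
    ∀ b : ℝ, 1 < b → ∃ C : ℝ, 0 < C ∧ ∀ t : ℝ, 0 ≤ t →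
      (∫ x in {x : ℝ | |x| ≤ Real.sqrt (A / B) *
          ((1 + t) ^ ((lam + 1) / (γ + 1)) - (1 + t) ^ (-b))}, ρbar x t ^ (1 - γ)) ≤
        C * (1 + t) ^ (γ * (lam + 1) / (γ + 1)) * Real.log (1 + t) := by
  intro b hb
  set a := (lam + 1) / (γ + 1) with ha_def
  have ha : 0 < a := div_pos (by linarith) (by linarith)
  have hABpos : 0 < A / B := div_pos hA hB
  set c := Real.sqrt (A / B) with hc_def
  have hc : 0 < c := Real.sqrt_pos.2 hABpos
  have hc2 : c ^ 2 = A / B := Real.sq_sqrt hABpos.le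
  refine ⟨2 * (a + b) / (B * c), by positivity, ?_⟩
  intro t ht
  have hu0 : (0:ℝ) < 1 + t := by linarith
  have hu1 : (1:ℝ) ≤ 1 + t := by linarith
  set u := 1 + t with hu_def
  set s := u ^ a with hs_def
  set r := u ^ (-b) with hr_def
  have hs0 : 0 < s := Real.rpow_pos_of_pos hu0 a
  have hs1 : 1 ≤ s := Real.one_le_rpow hu1 ha.le
  have hr0 : 0 < r := Real.rpow_pos_of_pos hu0 (-b)
  have hr1 : r ≤ 1 := Real.rpow_le_one_of_one_le_of_nonpos hu1 (by linarith)
  have hrs : r ≤ s := hr1.trans hs1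
  set M := c * (s - r) with hM_def
  have hM0 : 0 ≤ M := mul_nonneg hc.le (by linarith)
  have hcsM : c * s - M = c * r := by rw [hM_def]; ring
  have hd0 : 0 < c * s - M := by rw [hcsM]; positivity
  -- the set is an interval
  have hset : {x : ℝ | |x| ≤ M} = Set.Icc (-M) M := by
    ext x; simp [abs_le]
  -- pointwise identity on the interval
  have key : ∀ x ∈ Set.Icc (-M) M,
      ρbar x t ^ (1 - γ) = s ^ γ / (2 * B * c) * ((c * s - x)⁻¹ + (c * s + x)⁻¹) := by
    intro x hx
    obtain ⟨hx1, hx2⟩ := hx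
    have hd1 : 0 < c * s - x := by linarith
    have hd2 : 0 < c * s + x := by linarith
    have hinv : u ^ (-a) = s⁻¹ := by rw [Real.rpow_neg hu0.le]
    have hp : A - B * (x * u ^ (-a)) ^ 2 = B * (c * s - x) * (c * s + x) / s ^ 2 := by
      have hAeq : A = B * c ^ 2 := by rw [hc2]; field_simp
      rw [hinv, hAeq]
      field_simp
      ring
    have hp0 : 0 < A - B * (x * u ^ (-a)) ^ 2 := by rw [hp]; positivity
    rw [hρ x t]
    rw [show (1 + t) = u from rfl] -- align
    rw [max_eq_left hp0.le]
    rw [Real.mul_rpow (Real.rpow_nonneg hu0.le _) (Real.rpow_nonneg hp0.le _)]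
    rw [← Real.rpow_mul hu0.le, ← Real.rpow_mul hp0.le]
    rw [show -a * (1 - γ) = a * (γ - 1) by ring]
    rw [show 1 / (γ - 1) * (1 - γ) = -1 by
      rw [div_mul_eq_mul_div, div_eq_iff (sub_ne_zero.mpr (by linarith : γ ≠ 1))]; ring]
    rw [Real.rpow_neg_one, hp]
    have h1 : u ^ (a * (γ - 1)) * s = s ^ γ := by
      rw [hs_def, ← Real.rpow_add hu0, show a * (γ - 1) + a = a * γ by ring,
        Real.rpow_mul hu0.le]
    rw [← h1]
    field_simp
    ring
  have hmle : -M ≤ M := by linarith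
  have hd0' : 0 < c * s + M := by linarith
  have hcont1 : ContinuousOn (fun x : ℝ => (c * s - x)⁻¹) (Set.uIcc (-M) M) := by
    apply ContinuousOn.inv₀ (by fun_prop : Continuous fun x : ℝ => c * s - x).continuousOn
    intro x hx
    rw [Set.uIcc_of_le hmle] at hx
    have := hx.2
    exact ne_of_gt (by linarith)
  have hcont2 : ContinuousOn (fun x : ℝ => (c * s + x)⁻¹) (Set.uIcc (-M) M) := by
    apply ContinuousOn.inv₀ (by fun_prop : Continuous fun x : ℝ => c * s + x).continuousOn
    intro x hx
    rw [Set.uIcc_of_le hmle] at hx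
    have := hx.1
    exact ne_of_gt (by linarith)
  have hI1int : IntervalIntegrable (fun x : ℝ => (c * s - x)⁻¹) volume (-M) M :=
    hcont1.intervalIntegrable
  have hI2int : IntervalIntegrable (fun x : ℝ => (c * s + x)⁻¹) volume (-M) M :=
    hcont2.intervalIntegrable
  have hnot : (0 : ℝ) ∉ Set.uIcc (c * s - M) (c * s + M) := by
    rw [Set.uIcc_of_le (by linarith)]
    intro h
    exact absurd h.1 (by simp; linarith)
  have hI1 : (∫ x in (-M)..M, (c * s - x)⁻¹) = Real.log ((c * s + M) / (c * s - M)) := by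
    rw [intervalIntegral.integral_comp_sub_left (fun x => x⁻¹) (c * s), sub_neg_eq_add,
      integral_inv hnot]
  have hI2 : (∫ x in (-M)..M, (c * s + x)⁻¹) = Real.log ((c * s + M) / (c * s - M)) := by
    rw [intervalIntegral.integral_comp_add_left (fun x => x⁻¹) (c * s),
      show c * s + -M = c * s - M from by ring, integral_inv hnot]
  have hlog : Real.log ((c * s + M) / (c * s - M)) ≤ 2 * (a + b) * Real.log u := by
    have hratio : (c * s + M) / (c * s - M) = (2 * s - r) / r := by
      rw [hM_def]
      rw [show c * s + c * (s - r) = c * (2 * s - r) from by ring,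
        show c * s - c * (s - r) = c * r from by ring]
      rw [mul_div_mul_left _ _ hc.ne']
    have hle : (2 * s - r) / r ≤ (s / r) ^ 2 := by
      rw [div_pow, div_le_div_iff₀ hr0 (by positivity)]
      nlinarith [sq_nonneg (s - r)]
    calc Real.log ((c * s + M) / (c * s - M)) = Real.log ((2 * s - r) / r) := by rw [hratio]
      _ ≤ Real.log ((s / r) ^ 2) := Real.log_le_log (div_pos (by linarith) hr0) hle
      _ = 2 * (Real.log s - Real.log r) := by
          rw [Real.log_pow, Real.log_div hs0.ne' hr0.ne']; push_cast; ring
      _ = 2 * (a + b) * Real.log u := by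
          rw [hs_def, hr_def, Real.log_rpow hu0, Real.log_rpow hu0]; ring
  have hsg : u ^ (γ * (lam + 1) / (γ + 1)) = s ^ γ := by
    rw [hs_def, ← Real.rpow_mul hu0.le, ha_def]
    rw [show (lam + 1) / (γ + 1) * γ = γ * (lam + 1) / (γ + 1) from by ring]
  calc (∫ x in {x : ℝ | |x| ≤ M}, ρbar x t ^ (1 - γ))
      = ∫ x in Set.Icc (-M) M, ρbar x t ^ (1 - γ) := by rw [hset]
    _ = ∫ x in Set.Icc (-M) M, s ^ γ / (2 * B * c) * ((c * s - x)⁻¹ + (c * s + x)⁻¹) :=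
        setIntegral_congr_fun measurableSet_Icc key
    _ = ∫ x in (-M)..M, s ^ γ / (2 * B * c) * ((c * s - x)⁻¹ + (c * s + x)⁻¹) := by
        rw [intervalIntegral.integral_of_le hmle, integral_Icc_eq_integral_Ioc]
    _ = s ^ γ / (2 * B * c) *
          ((∫ x in (-M)..M, (c * s - x)⁻¹) + ∫ x in (-M)..M, (c * s + x)⁻¹) := by
        rw [intervalIntegral.integral_const_mul, intervalIntegral.integral_add hI1int hI2int]
    _ = s ^ γ / (2 * B * c) * (2 * Real.log ((c * s + M) / (c * s - M))) := by
        rw [hI1, hI2]; ring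
    _ ≤ s ^ γ / (2 * B * c) * (2 * (2 * (a + b) * Real.log u)) := by
        have h0 : 0 ≤ s ^ γ / (2 * B * c) := by positivity
        exact mul_le_mul_of_nonneg_left (by linarith) h0
    _ = 2 * (a + b) / (B * c) * u ^ (γ * (lam + 1) / (γ + 1)) * Real.log u := by
        rw [hsg]; ring
end
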